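/- Let φ_W, T ∈ ℝ and a > 0, and suppose sinh(2aT)·sin(2φ_W) ≠ 0. Then F²_{φ_W,T}(a) = 0 if and only if a = −cot(φ_W)·tanh(aT) or a = tan(φ_W)·coth(aT); equivalently, a is a root of F²_{φ_W,T} if and only if x = a solves the equation −x·tan φ_W = tanh(Tx) or the equation x·cot φ_W = coth(Tx). -/
import Mathlib


open Real

/-- The determinant function
`F²_{φ_W,T}(a) = -a² sinh(2aT) sin(2φ_W) + 2a (1 - cosh(2aT) cos(2φ_W)) + sinh(2aT) sin(2φ_W)`. -/
noncomputable def F2 (φW T a : ℝ) : ℝ :=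
  -a ^ 2 * Real.sinh (2 * a * T) * Real.sin (2 * φW)
    + 2 * a * (1 - Real.cosh (2 * a * T) * Real.cos (2 * φW))
    + Real.sinh (2 * a * T) * Real.sin (2 * φW)

/-- The hyperbolic cotangent `coth x = cosh x / sinh x` (not available in Mathlib). -/
noncomputable def Real.coth (x : ℝ) : ℝ := Real.cosh x / Real.sinh x

theorem F2_roots_characterization (φW T a : ℝ) (ha : 0 < a)
    (hne : Real.sinh (2 * a * T) * Real.sin (2 * φW) ≠ 0) :
    F2 φW T a = 0 ↔
      (-a * Real.tan φW = Real.tanh (T * a) ∨ a * Real.cot φW = Real.coth (T * a)) := by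
  set p := Real.sin φW with hpdef
  set q := Real.cos φW with hqdef
  set u := Real.sinh (a * T) with hudef
  set v := Real.cosh (a * T) with hvdef
  have hv : 0 < v := Real.cosh_pos (a * T)
  have hs2 : Real.sinh (2 * a * T) = 2 * u * v := by
    rw [mul_assoc, Real.sinh_two_mul]
  have hc2 : Real.cosh (2 * a * T) = 2 * v ^ 2 - 1 := by
    rw [mul_assoc]
    rw [show (2:ℝ) * (a*T) = a*T + a*T by ring, Real.cosh_add]
    linear_combination -Real.cosh_sq_sub_sinh_sq (a * T)
  have hsin2 : Real.sin (2 * φW) = 2 * p * q := by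
    rw [Real.sin_two_mul]
  have hcos2 : Real.cos (2 * φW) = 2 * q ^ 2 - 1 := Real.cos_two_mul φW
  have hne' : u * p * q ≠ 0 := by
    intro h
    apply hne
    rw [hs2, hsin2]
    rcases mul_eq_zero.1 h with h' | h'
    · rcases mul_eq_zero.1 h' with h'' | h''
      · rw [h'']; ring
      · rw [h'']; ring
    · rw [h']; ring
  have hu : u ≠ 0 := fun h => hne' (by rw [h]; ring)
  have hp : p ≠ 0 := fun h => hne' (by rw [h]; ring)
  have hq : q ≠ 0 := fun h => hne' (by rw [h]; ring)
  have h1 : p ^ 2 + q ^ 2 = 1 := Real.sin_sq_add_cos_sq φW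
  have h2 : v ^ 2 - u ^ 2 = 1 := Real.cosh_sq_sub_sinh_sq (a * T)
  have key : F2 φW T a =
      -4 * (a * p * v + q * u) * (a * q * u - p * v) := by
    unfold F2
    rw [hs2, hc2, hsin2, hcos2]
    linear_combination (-4*a*v^2) * h1 + (-4*a*q^2) * h2
  have e1 : (a * p * v + q * u = 0) ↔ (-a * Real.tan φW = Real.tanh (T * a)) := by
    rw [Real.tan_eq_sin_div_cos, Real.tanh_eq_sinh_div_cosh, mul_comm T a,
      ← hpdef, ← hqdef, ← hudef, ← hvdef]
    field_simp
    constructor <;> intro h <;> linarith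
  have e2 : (a * q * u - p * v = 0) ↔ (a * Real.cot φW = Real.coth (T * a)) := by
    rw [Real.cot_eq_cos_div_sin, Real.coth, mul_comm T a,
      ← hpdef, ← hqdef, ← hudef, ← hvdef]
    field_simp
    constructor <;> intro h <;> linarith
  rw [key]
  constructor
  · intro h
    rcases mul_eq_zero.1 h with h' | hY
    · rcases mul_eq_zero.1 h' with h0 | hX
      · norm_num at h0
      · exact Or.inl (e1.1 hX)
    · exact Or.inr (e2.1 hY)
  · rintro (h | h)
    · rw [e1.2 h]; ring
    · rw [e2.2 h]; ring
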